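/- Fix an integer d ≥ 3. For every integer n ≥ 3 there exists a real number c with 0 < c < 1 such that Q_n(c) = 0 while Q_m(c) ≠ 0 for every 1 ≤ m < n. -/
import Mathlib


/-- For a fixed degree `d`, the functions `Q_k : ℝ → ℝ` defined recursively by
`Q_1(y) = 1` and
`Q_{k+1}(y) = ((d−1)y^d − (d−1)Q_k(y)^d)/((d−1)y^d − d·Q_k(y)^(d−1))` (for `k ≥ 1`);
`Q d 0` is set to the constant `0`, and is never used below. -/
noncomputable def Q (d : ℕ) : ℕ → ℝ → ℝ
  | 0, _ => 0
  | 1, _ => 1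
  | (k + 2), y =>
      (((d : ℝ) - 1) * y ^ d - ((d : ℝ) - 1) * (Q d (k + 1) y) ^ d) /
        (((d : ℝ) - 1) * y ^ d - (d : ℝ) * (Q d (k + 1) y) ^ (d - 1))

lemma Q_one (d : ℕ) (y : ℝ) : Q d 1 y = 1 := rfl

lemma Q_add_two (d k : ℕ) (y : ℝ) :
    Q d (k + 2) y =
      (((d : ℝ) - 1) * y ^ d - ((d : ℝ) - 1) * (Q d (k + 1) y) ^ d) /
        (((d : ℝ) - 1) * y ^ d - (d : ℝ) * (Q d (k + 1) y) ^ (d - 1)) := rfl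

section
variable {d : ℕ} (hd : 3 ≤ d)

include hd

lemma d_real : (3 : ℝ) ≤ (d : ℝ) := by exact_mod_cast hd

/-- denominator is negative whenever `0 < q`, `y ≤ q`, `0 ≤ y ≤ 1`. -/
lemma den_neg {y q : ℝ} (hy0 : 0 ≤ y) (hy1 : y ≤ 1) (hq : 0 < q) (hyq : y ≤ q) :
    ((d : ℝ) - 1) * y ^ d - (d : ℝ) * q ^ (d - 1) < 0 := by
  have hdr := d_real hd
  have h1 : y ^ d ≤ y ^ (d - 1) := pow_le_pow_of_le_one hy0 hy1 (Nat.sub_le d 1)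
  have h2 : y ^ (d - 1) ≤ q ^ (d - 1) := pow_le_pow_left₀ hy0 hyq _
  have h3 : 0 < q ^ (d - 1) := pow_pos hq _
  nlinarith

/-- numerator is negative whenever `0 ≤ y < q`. -/
lemma num_neg {y q : ℝ} (hy0 : 0 ≤ y) (hyq : y < q) :
    ((d : ℝ) - 1) * y ^ d - ((d : ℝ) - 1) * q ^ d < 0 := by
  have hdr := d_real hd
  have h1 : y ^ d < q ^ d := by
    apply pow_lt_pow_left₀ hyq hy0
    omega
  nlinarith

lemma step (k : ℕ) (a : ℝ) (ha0 : 0 < a) (ha1 : a ≤ 1)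
    (h1 : Q d (k + 1) a = a)
    (h2 : ∀ y, 0 < y → y ≤ a → ∀ j, 1 ≤ j → j < k + 1 → y < Q d j y)
    (h3 : ∀ y, 0 ≤ y → y < a → y < Q d (k + 1) y)
    (h4 : ContinuousOn (Q d (k + 1)) (Set.Icc 0 a)) :
    ∃ b, 0 < b ∧ b < a ∧ Q d (k + 2) b = b ∧
      (∀ y, 0 < y → y ≤ b → ∀ j, 1 ≤ j → j < k + 2 → y < Q d j y) ∧
      (∀ y, 0 ≤ y → y < b → y < Q d (k + 2) y) ∧
      ContinuousOn (Q d (k + 2)) (Set.Icc 0 b) := by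
  -- on [0,a], Q_{k+1} ≥ y and > 0
  have hQpos : ∀ y ∈ Set.Icc (0:ℝ) a, 0 < Q d (k+1) y ∧ y ≤ Q d (k+1) y := by
    rintro y ⟨hy0, hya⟩
    rcases lt_or_eq_of_le hya with h | h
    · have := h3 y hy0 h
      exact ⟨lt_of_le_of_lt hy0 this, this.le⟩
    · rw [h, h1]; exact ⟨ha0, le_refl a⟩
  have hden : ∀ y ∈ Set.Icc (0:ℝ) a,
      ((d : ℝ) - 1) * y ^ d - (d : ℝ) * (Q d (k+1) y) ^ (d - 1) < 0 := by
    intro y hy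
    obtain ⟨hq, hyq⟩ := hQpos y hy
    exact den_neg hd hy.1 (hy.2.trans ha1) hq hyq
  -- continuity of Q_{k+2} on [0,a]
  have hcont : ContinuousOn (Q d (k + 2)) (Set.Icc 0 a) := by
    have : ContinuousOn (fun y : ℝ =>
        (((d : ℝ) - 1) * y ^ d - ((d : ℝ) - 1) * (Q d (k + 1) y) ^ d) /
        (((d : ℝ) - 1) * y ^ d - (d : ℝ) * (Q d (k + 1) y) ^ (d - 1)))
        (Set.Icc 0 a) := by
      apply ContinuousOn.div
      · exact (continuousOn_const.mul (continuousOn_pow d)).sub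
          (continuousOn_const.mul (h4.pow d))
      · exact (continuousOn_const.mul (continuousOn_pow d)).sub
          (continuousOn_const.mul (h4.pow (d-1)))
      · intro y hy
        exact (hden y hy).ne
    exact this
  -- positivity of Q_{k+2} where Q_{k+1} > y
  have hpos2 : ∀ y ∈ Set.Icc (0:ℝ) a, y < Q d (k+1) y → 0 < Q d (k+2) y := by
    intro y hy hlt
    rw [Q_add_two]
    exact div_pos_of_neg_of_neg (num_neg hd hy.1 hlt) (hden y hy)
  -- Q_{k+2}(a) = 0
  have hQa : Q d (k + 2) a = 0 := by
    rw [Q_add_two, h1, sub_self, zero_div]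
  set g : ℝ → ℝ := fun y => Q d (k + 2) y - y with hg_def
  have hgcont : ContinuousOn g (Set.Icc 0 a) := hcont.sub continuousOn_id
  have hg0 : 0 < g 0 := by
    have h0mem : (0:ℝ) ∈ Set.Icc (0:ℝ) a := ⟨le_refl 0, ha0.le⟩
    have := hpos2 0 h0mem (h3 0 le_rfl ha0)
    simpa [hg_def] using this
  have hga : g a < 0 := by
    simp only [hg_def, hQa]
    linarith
  set Z := Set.Icc (0:ℝ) a ∩ g ⁻¹' {0} with hZ_def
  have hZclosed : IsClosed Z :=
    hgcont.preimage_isClosed_of_isClosed isClosed_Icc isClosed_singleton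
  have hZne : Z.Nonempty := by
    have hsub := intermediate_value_Icc' ha0.le hgcont
    have : (0:ℝ) ∈ Set.Icc (g a) (g 0) := ⟨hga.le, hg0.le⟩
    obtain ⟨x, hx, hgx⟩ := hsub this
    exact ⟨x, hx, by simpa using hgx⟩
  have hZbdd : BddBelow Z := ⟨0, fun x hx => hx.1.1⟩
  set b := sInf Z with hb_def
  have hbZ : b ∈ Z := hZclosed.csInf_mem hZne hZbdd
  have hbmin : ∀ y ∈ Z, b ≤ y := fun y hy => csInf_le hZbdd hy
  have hgb : g b = 0 := hbZ.2
  have hb0 : 0 < b := by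
    rcases lt_or_eq_of_le hbZ.1.1 with h | h
    · exact h
    · exfalso; rw [← h] at hgb; linarith
  have hba : b < a := by
    rcases lt_or_eq_of_le hbZ.1.2 with h | h
    · exact h
    · exfalso; rw [h] at hgb; linarith
  have hQb : Q d (k + 2) b = b := by
    have : Q d (k+2) b - b = 0 := hgb
    linarith
  refine ⟨b, hb0, hba, hQb, ?_, ?_, hcont.mono (Set.Icc_subset_Icc_right hba.le)⟩
  · intro y hy0 hyb j hj1 hj2
    rcases Nat.lt_or_ge j (k+1) with h | h
    · exact h2 y hy0 (hyb.trans hba.le) j hj1 h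
    · have : j = k + 1 := by omega
      rw [this]
      exact h3 y hy0.le (lt_of_le_of_lt hyb hba)
  · intro y hy0 hyb
    by_contra hcon
    push_neg at hcon
    have hgy : g y ≤ 0 := by simp only [hg_def]; linarith
    rcases lt_or_eq_of_le hgy with h | h
    · -- IVT on [0,y] gives a zero below b
      have hsub := intermediate_value_Icc' hy0 (hgcont.mono
        (Set.Icc_subset_Icc_right (hyb.le.trans hba.le)))
      have : (0:ℝ) ∈ Set.Icc (g y) (g 0) := ⟨h.le, hg0.le⟩
      obtain ⟨x, hx, hgx⟩ := hsub this
      have hxZ : x ∈ Z := ⟨⟨hx.1, hx.2.trans (hyb.le.trans hba.le)⟩, by simpa using hgx⟩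
      have := hbmin x hxZ
      have : b ≤ y := this.trans hx.2
      linarith
    · have hyZ : y ∈ Z := ⟨⟨hy0, hyb.le.trans hba.le⟩, by simp [← h]⟩
      have := hbmin y hyZ
      linarith

lemma key : ∀ k : ℕ, ∃ a : ℝ, 0 < a ∧ a ≤ 1 ∧ (k ≠ 0 → a < 1) ∧
    Q d (k + 1) a = a ∧
    (∀ y, 0 < y → y ≤ a → ∀ j, 1 ≤ j → j < k + 1 → y < Q d j y) ∧
    (∀ y, 0 ≤ y → y < a → y < Q d (k + 1) y) ∧
    ContinuousOn (Q d (k + 1)) (Set.Icc 0 a) := by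
  intro k
  induction k with
  | zero =>
    refine ⟨1, one_pos, le_refl 1, fun h => absurd rfl h, Q_one d 1, ?_, ?_, ?_⟩
    · intro y _ _ j hj1 hj2; omega
    · intro y _ hy1; rw [Q_one]; exact hy1
    · have : Q d 1 = fun _ : ℝ => (1:ℝ) := by funext y; exact Q_one d y
      rw [this]; exact continuousOn_const
  | succ k ih =>
    obtain ⟨a, ha0, ha1, _, h1, h2, h3, h4⟩ := ih
    obtain ⟨b, hb0, hba, hQb, hb2, hb3, hb4⟩ := step hd k a ha0 ha1 h1 h2 h3 h4
    exact ⟨b, hb0, (hba.trans_le ha1).le, fun _ => hba.trans_le ha1, hQb, hb2, hb3, hb4⟩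

end


/-- Fix an integer `d ≥ 3`.  For every integer `n ≥ 3` there exists a real number `c`
with `0 < c < 1` such that `Q_n(c) = 0` while `Q_m(c) ≠ 0` for every `1 ≤ m < n`. -/
theorem exists_c_Qn_zero_Qm_ne_zero_general_degree
    (d : ℕ) (hd : 3 ≤ d) (n : ℕ) (hn : 3 ≤ n) :
    ∃ c : ℝ, 0 < c ∧ c < 1 ∧ Q d n c = 0 ∧ ∀ m : ℕ, 1 ≤ m → m < n → Q d m c ≠ 0 := by
  obtain ⟨k, rfl⟩ : ∃ k, n = k + 3 := ⟨n - 3, by omega⟩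
  obtain ⟨c, hc0, _, hc1', hQc, h2, _, _⟩ := key hd (k + 1)
  have hc1 : c < 1 := hc1' (by omega)
  refine ⟨c, hc0, hc1, ?_, ?_⟩
  · show Q d (k + 1 + 2) c = 0
    rw [Q_add_two, hQc, sub_self, zero_div]
  · intro m hm1 hm2
    rcases Nat.lt_or_ge m (k + 2) with h | h
    · have := h2 c hc0 le_rfl m hm1 h
      linarith
    · have : m = k + 2 := by omega
      rw [this, hQc]
      exact hc0.ne'
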